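/- arXiv:1006.3025 — 10 statements merged into one kernel-verified Lean document; each statement's English description precedes it below -/
import Mathlib

section
/- For integers n > d ≥ 0, the sum of trinomial coefficients ∑_{k=0}^{n-1} T(k,d) equals ∑_{1≤k≤n, k+d odd} C(n,k)·C(k-1, (k+d-1)/2), where T(k,d) denotes the trinomial coefficient, i.e., the coefficient of x^{k+d} in (1+x+x^2)^k. -/
/-!
Put `P = 1 + X + X²`, `Q = 1 + X²`, so that `P = Q + X`. The geometric sum
`∑_{i<n} P^i X^(n-1-i)` times `Q = P - X` is `P^n - X^n`, and by the binomial theorem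
`P^n - X^n = Q · ∑_{k=1}^n C(n,k) Q^(k-1) X^(n-k)`. Cancelling the monic `Q` and reading off
the coefficient of `X^(n-1+d)` gives the identity: on the left `T(i,d)`, on the right
`C(n,k)` times the coefficient of `X^(k-1+d)` in `Q^(k-1)`.
-/

/-- The trinomial coefficient `T n m`: the coefficient of `x^(n+m)` in `(1+x+x^2)^n`. -/
noncomputable def trinomial (n m : ℕ) : ℤ :=
  Polynomial.coeff ((1 + Polynomial.X + Polynomial.X ^ 2 : Polynomial ℤ) ^ n) (n + m)

open Polynomial Finset

theorem add_pow_eq_pow_add_mul_sum_choose {R : Type*} [CommSemiring R] (x y : R) (n : ℕ) :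
    (x + y) ^ n = y ^ n + x * ∑ k ∈ Icc 1 n, n.choose k * x ^ (k - 1) * y ^ (n - k) := by
  rw [add_pow, sum_range_succ', ← Ico_add_one_right_eq_Icc, sum_Ico_eq_sum_range, mul_sum]
  simp only [pow_succ, pow_zero, tsub_zero, one_mul, Nat.choose_zero_right, Nat.cast_one, mul_one,
    add_tsub_cancel_right, add_comm 1]
  rw [add_comm]
  congr 1
  exact sum_congr rfl fun k _ => by ring

theorem sum_add_pow_mul_pow_eq_sum_choose {R : Type*} [CommSemiring R] [IsLeftCancelAdd R]
    {x : R} (hx : IsLeftRegular x) (y : R) (n : ℕ) :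
    ∑ i ∈ range n, (x + y) ^ i * y ^ (n - 1 - i) =
      ∑ k ∈ Icc 1 n, n.choose k * x ^ (k - 1) * y ^ (n - k) := by
  apply hx
  apply add_left_cancel (a := y ^ n)
  rw [← add_pow_eq_pow_add_mul_sum_choose, ← geom_sum₂_mul_add, add_comm, mul_comm]

theorem coeff_one_add_X_sq_pow {R : Type*} [CommSemiring R] (m t : ℕ) :
    ((1 + X ^ 2 : R[X]) ^ m).coeff t = if 2 ∣ t then (m.choose (t / 2) : R) else 0 := by
  have h : (1 + X ^ 2 : R[X]) ^ m = expand R 2 ((1 + X) ^ m) := by simp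
  rw [h, coeff_expand two_pos, add_comm, coeff_X_add_one_pow]

theorem trinomial_eq_coeff_mul_X_pow (i d s : ℕ) :
    trinomial i d = ((1 + X + X ^ 2 : ℤ[X]) ^ i * X ^ s).coeff (i + d + s) :=
  (coeff_mul_X_pow _ _ _).symm

theorem stmt0_general (n d : ℕ) :
    ∑ k ∈ Finset.range n, trinomial k d =
      ∑ k ∈ Finset.Icc 1 n,
        if (k + d) % 2 = 1 then
          (Nat.choose n k : ℤ) * Nat.choose (k - 1) ((k + d - 1) / 2)
        else 0 := by
  have hmonic : (1 + X ^ 2 : ℤ[X]).Monic := by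
    simpa [add_comm] using monic_X_pow_add_C (1 : ℤ) two_ne_zero
  have key := congrArg (coeff · (n - 1 + d))
    (sum_add_pow_mul_pow_eq_sum_choose hmonic.isRegular.left X n)
  simp only [finsetSum_coeff, show (1 + X ^ 2 : ℤ[X]) + X = 1 + X + X ^ 2 by ring] at key
  convert key using 1
  · refine sum_congr rfl fun i hi => ?_
    rw [trinomial_eq_coeff_mul_X_pow i d (n - 1 - i)]
    have := mem_range.mp hi
    congr 1
    omega
  · refine sum_congr rfl fun k hk => ?_
    obtain ⟨hk1, hkn⟩ := mem_Icc.mp hk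
    rw [mul_assoc, coeff_natCast_mul, show n - 1 + d = k - 1 + d + (n - k) by omega,
      coeff_mul_X_pow, coeff_one_add_X_sq_pow, show k + d - 1 = k - 1 + d by omega]
    have hpar : (k + d) % 2 = 1 ↔ 2 ∣ k - 1 + d := by omega
    simp only [hpar, mul_ite, mul_zero]

theorem stmt0 (n d : ℕ) (hdn : d < n) :
    ∑ k ∈ Finset.range n, trinomial k d =
      ∑ k ∈ Finset.Icc 1 n,
        if (k + d) % 2 = 1 then
          (Nat.choose n k : ℤ) * Nat.choose (k - 1) ((k + d - 1) / 2)
        else 0 :=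
  stmt0_general n d
end

section
/- Let p > 3 be a prime and 0 ≤ d < p. If d is even, then ∑_{k=0}^{p-1} T(k,d) ≡ (-1)^{(p+d-1)/2} (mod p), and if d is odd, then ∑_{k=0}^{p-1} T(k,d) ≡ 0 (mod p), where T(k,d) is the trinomial coefficient. -/
open Polynomial hiding trinomial
open Finset

theorem trinomial_cast_eq_coeff {R : Type*} [CommRing R] (n m : ℕ) :
    (trinomial n m : R) = ((1 + X + X ^ 2 : R[X]) ^ n).coeff (n + m) := by
  rw [trinomial, ← eq_intCast (Int.castRingHom R), ← coeff_map]
  simp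

theorem coeff_sum_trinomial_pow_mul_X_pow {R : Type*} [CommRing R] (n m : ℕ) :
    (∑ k ∈ range n, (1 + X + X ^ 2 : R[X]) ^ k * X ^ (n - 1 - k)).coeff (n - 1 + m) =
      ∑ k ∈ range n, (trinomial k m : R) := by
  rw [finsetSum_coeff]
  refine sum_congr rfl fun k hk => ?_
  rw [mem_range] at hk
  rw [coeff_mul_X_pow', if_pos (by omega), trinomial_cast_eq_coeff,
    show n - 1 + m - (n - 1 - k) = k + m by omega]

theorem coeff_geom_sum_neg_X_sq {R : Type*} [CommRing R] (n m : ℕ) :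
    (∑ j ∈ range n, (-X ^ 2 : R[X]) ^ j).coeff m =
      if Even m ∧ m / 2 < n then (-1) ^ (m / 2) else 0 := by
  have hterm (j : ℕ) : (-X ^ 2 : R[X]) ^ j = C ((-1) ^ j) * X ^ (2 * j) := by
    rw [neg_pow, ← pow_mul, C_pow, C_neg, C_1]
  simp_rw [hterm, finsetSum_coeff, coeff_C_mul_X_pow]
  by_cases hm : Even m
  · obtain ⟨t, rfl⟩ := hm
    have hindex (j : ℕ) : t + t = 2 * j ↔ t = j := by omega
    simp_rw [hindex, sum_ite_eq, mem_range, show (t + t) / 2 = t by omega, Even.add_self, true_and]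
  · rw [if_neg (by tauto)]
    refine sum_eq_zero fun j _ => if_neg ?_
    rintro rfl
    exact hm (even_two_mul j)

theorem sum_trinomial_pow_mul_X_pow_eq_geom_sum {R : Type*} [CommRing R] (p : ℕ) [Fact p.Prime]
    [CharP R p] (hp : Odd p) :
    ∑ k ∈ range p, (1 + X + X ^ 2 : R[X]) ^ k * X ^ (p - 1 - k) =
      ∑ j ∈ range p, (-X ^ 2 : R[X]) ^ j := by
  refine (monic_X_pow_add_C (1 : R) two_ne_zero).isRegular.right ?_
  have h_telescope := geom_sum₂_mul (1 + X + X ^ 2 : R[X]) X p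
  have h_geom := geom_sum_mul (-X ^ 2 : R[X]) p
  rw [add_pow_char, add_pow_char, one_pow, ← pow_mul] at h_telescope
  rw [hp.neg_pow, ← pow_mul] at h_geom
  simp only [C_1]
  linear_combination h_telescope + h_geom

theorem stmt1 (p : ℕ) (hp : p.Prime) (hp3 : 3 < p) (d : ℕ) (hd : d < p) :
    (∑ k ∈ Finset.range p, (trinomial k d : ZMod p)) =
      if Even d then (-1 : ZMod p) ^ ((p + d - 1) / 2) else 0 := by
  have : Fact p.Prime := ⟨hp⟩
  have hp_odd : Odd p := hp.odd_of_ne_two (by omega)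
  rw [← coeff_sum_trinomial_pow_mul_X_pow, sum_trinomial_pow_mul_X_pow_eq_geom_sum p hp_odd,
    coeff_geom_sum_neg_X_sq, Nat.sub_add_comm hp.one_le]
  have h_even : Even (p - 1 + d) ↔ Even d := by
    rw [Nat.even_add, Nat.even_sub hp.one_le]
    simp [Nat.not_even_iff_odd.mpr hp_odd]
  simp only [h_even, show (p - 1 + d) / 2 < p by omega, and_true]
end

section
/- Let p > 3 be a prime and let m be an integer with 0 ≤ m < (p-1)/2, m ≥ 1. Then ∑_{j=1}^{(p-1)/2} (1/j)·C(2j, j+m) ≡ (1/m)·(1 - 3·[3 ∣ p+m]) (mod p), where the sum and the inverse of j and m are taken in Z/pZ and [A] equals 1 if assertion A holds and 0 otherwise. -/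
/-!
Write `N = (p - 1) / 2` and `S a = ∑_{k<N} C(2k+1, k+a+1)`. The ballot identity
`j (C(2j-1, j+m-1) - C(2j-1, j+m)) = m C(2j, j+m)` turns the sum into `m⁻¹ (S (m-1) - S m)`.
Applying `C(n+2, r+2) = C(n, r) + 2 C(n, r+1) + C(n, r+2)` termwise gives
`S a + S (a+1) + S (a+2) = C(p, N+a+2)`, which modulo `p` is `1` for `a = N - 1` and `0` otherwise.
Together with `S N = S (N+1) = 0` this recurrence forces `S a ≡ 1, -1, 0` according as
`N - 1 - a ≡ 0, 1, 2 (mod 3)`, and `3 ∣ p + m ↔ 3 ∣ N - 1 - m` because `p + m + (N - 1 - m) = 3N`.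
-/

open Finset

theorem Nat.choose_add_two_add_two (n r : ℕ) :
    (n + 2).choose (r + 2) = n.choose r + 2 * n.choose (r + 1) + n.choose (r + 2) := by
  simp only [Nat.choose_succ_succ]
  ring

theorem Nat.succ_mul_choose_two_mul_add_one (k m : ℕ) :
    (k + 1) * (2 * k + 1).choose (k + m) =
      m * (2 * (k + 1)).choose (k + 1 + m) + (k + 1) * (2 * k + 1).choose (k + m + 1) := by
  rw [show 2 * (k + 1) = 2 * k + 1 + 1 by ring, show k + 1 + m = k + m + 1 by ring,
    Nat.choose_succ_succ]
  rcases le_or_gt m (k + 1) with hm | hm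
  · have h := Nat.choose_succ_right_eq (2 * k + 1) (k + m)
    rw [show 2 * k + 1 - (k + m) = k + 1 - m by omega] at h
    zify [hm] at h ⊢
    linear_combination -h
  · rw [Nat.choose_eq_zero_of_lt (by omega), Nat.choose_eq_zero_of_lt (by omega)]
    simp

theorem Nat.Prime.natCast_choose_self {p k : ℕ} (hp : p.Prime) (hk : k ≠ 0) :
    (p.choose k : ZMod p) = if k = p then 1 else 0 := by
  split_ifs with hkp
  · simp [hkp]
  · rcases lt_or_gt_of_ne hkp with hlt | hgt
    · exact (ZMod.natCast_eq_zero_iff _ _).mpr (hp.dvd_choose_self hk hlt)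
    · simp [Nat.choose_eq_zero_of_lt hgt]

theorem inv_mul_choose_two_mul {K : Type*} [Field K] {k m : ℕ} (hk : ((k + 1 : ℕ) : K) ≠ 0)
    (hm : (m : K) ≠ 0) :
    ((k + 1 : ℕ) : K)⁻¹ * (2 * (k + 1)).choose (k + 1 + m) =
      (m : K)⁻¹ * ((2 * k + 1).choose (k + m) - (2 * k + 1).choose (k + m + 1)) := by
  have h := congrArg (Nat.cast : ℕ → K) (Nat.succ_mul_choose_two_mul_add_one k m)
  rw [inv_mul_eq_div, inv_mul_eq_div, div_eq_div_iff hk hm]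
  push_cast at h ⊢
  linear_combination -h

def oddChooseSum (N a : ℕ) : ℕ := ∑ k ∈ range N, (2 * k + 1).choose (k + a + 1)

theorem oddChooseSum_eq_zero {N a : ℕ} (h : N ≤ a) : oddChooseSum N a = 0 :=
  sum_eq_zero fun k hk => Nat.choose_eq_zero_of_lt (by simp at hk; omega)

theorem oddChooseSum_add_add (N a : ℕ) :
    oddChooseSum N a + oddChooseSum N (a + 1) + oddChooseSum N (a + 2) =
      (2 * N + 1).choose (N + a + 2) := by
  induction N with
  | zero => simp [oddChooseSum, Nat.choose_eq_zero_of_lt]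
  | succ N ih =>
    simp only [oddChooseSum, sum_range_succ] at ih ⊢
    rw [show 2 * (N + 1) + 1 = 2 * N + 1 + 2 by ring, show N + 1 + a + 2 = N + a + 1 + 2 by ring,
      Nat.choose_add_two_add_two, show N + (a + 1) + 1 = N + a + 1 + 1 by ring,
      show N + (a + 2) + 1 = N + a + 1 + 2 by ring, ← ih]
    ring

def periodThree (i : ℕ) : ℤ := if i % 3 = 0 then 1 else if i % 3 = 1 then -1 else 0

theorem periodThree_add_add (i : ℕ) :
    periodThree i + periodThree (i + 1) + periodThree (i + 2) = 0 := by
  unfold periodThree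
  have := Nat.mod_lt i (by norm_num : 3 > 0)
  interval_cases h : i % 3 <;> simp [Nat.add_mod, h]

theorem periodThree_succ_sub (i : ℕ) :
    periodThree (i + 1) - periodThree i = 1 - 3 * if 3 ∣ i then 1 else 0 := by
  unfold periodThree
  have := Nat.mod_lt i (by norm_num : 3 > 0)
  interval_cases h : i % 3 <;> simp [Nat.add_mod, h, Nat.dvd_iff_mod_eq_zero]

theorem eq_periodThree_of_add_add_eq {R : Type*} [CommRing R] {N : ℕ} {g : ℕ → R}
    (hrec : ∀ a, g a + g (a + 1) + g (a + 2) = if a + 1 = N then 1 else 0)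
    (hN : g N = 0) (hN1 : g (N + 1) = 0) {a i : ℕ} (hai : a + i + 1 = N) :
    g a = periodThree i := by
  induction i using Nat.strong_induction_on generalizing a with
  | _ i ih =>
    rcases i with _ | _ | i
    · subst hai
      simpa [hN, hN1, periodThree] using hrec a
    · have h1 : g (a + 1) = 1 := by simpa [periodThree] using ih 0 (by omega) (by omega)
      have h2 : g (a + 2) = 0 := by rw [show a + 2 = N by omega, hN]
      have h := hrec a
      rw [if_neg (by omega), h1, h2] at h
      rw [show periodThree 1 = -1 from rfl]
      push_cast
      linear_combination h
    · have h1 := ih (i + 1) (by omega) (a := a + 1) (by omega)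
      have h2 := ih i (by omega) (a := a + 2) (by omega)
      have h := hrec a
      rw [if_neg (by omega), h1, h2] at h
      have hsum := congrArg (Int.cast : ℤ → R) (periodThree_add_add i)
      push_cast at hsum
      linear_combination h - hsum

theorem oddChooseSum_natCast_zmod {p N a i : ℕ} (hp : p.Prime) (hpN : p = 2 * N + 1)
    (hai : a + i + 1 = N) : (oddChooseSum N a : ZMod p) = periodThree i := by
  refine eq_periodThree_of_add_add_eq (g := fun a => (oddChooseSum N a : ZMod p))
    (fun b => ?_) ?_ ?_ hai
  · rw_mod_cast [oddChooseSum_add_add, ← hpN, hp.natCast_choose_self (k := N + b + 2) (by omega)]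
    push_cast
    exact if_congr (by omega) rfl rfl
  · simp [oddChooseSum_eq_zero le_rfl]
  · simp [oddChooseSum_eq_zero (Nat.le_succ N)]

theorem stmt2_general (p : ℕ) (hp : p.Prime) (m : ℕ) (hm1 : 1 ≤ m)
    (hm : m < (p - 1) / 2) :
    ∑ j ∈ Finset.Icc 1 ((p - 1) / 2), (j : ZMod p)⁻¹ * Nat.choose (2 * j) (j + m) =
      (m : ZMod p)⁻¹ * (1 - 3 * (if 3 ∣ p + m then 1 else 0)) := by
  have : Fact p.Prime := ⟨hp⟩
  set N := (p - 1) / 2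
  have hpN : p = 2 * N + 1 := by
    rcases hp.eq_two_or_odd' with rfl | ⟨c, rfl⟩ <;> omega
  have hcast_ne {n : ℕ} (h0 : 0 < n) (hlt : n < p) : (n : ZMod p) ≠ 0 := by
    rw [Ne, ZMod.natCast_eq_zero_iff]
    exact Nat.not_dvd_of_pos_of_lt h0 hlt
  obtain ⟨m, rfl⟩ : ∃ m', m = m' + 1 := ⟨m - 1, by omega⟩
  have hreindex := sum_Ico_add'
    (fun j => ((j : ℕ) : ZMod p)⁻¹ * ((2 * j).choose (j + (m + 1)) : ZMod p)) 0 N 1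
  rw [zero_add, Ico_add_one_right_eq_Icc, ← range_eq_Ico] at hreindex
  rw [← hreindex]
  calc ∑ k ∈ range N, ((k + 1 : ℕ) : ZMod p)⁻¹ * (2 * (k + 1)).choose (k + 1 + (m + 1))
      = ((m + 1 : ℕ) : ZMod p)⁻¹ * (oddChooseSum N m - oddChooseSum N (m + 1)) := by
        rw [sum_congr rfl fun k hk => inv_mul_choose_two_mul (k := k) (m := m + 1)
          (hcast_ne (by omega) (by simp at hk; omega)) (hcast_ne (by omega) (by omega)), ← mul_sum]
        simp [oddChooseSum, add_assoc]
    _ = ((m + 1 : ℕ) : ZMod p)⁻¹ * (periodThree (N - m - 2 + 1) - periodThree (N - m - 2)) := by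
        rw [oddChooseSum_natCast_zmod (i := N - m - 2 + 1) hp hpN (by omega),
          oddChooseSum_natCast_zmod (i := N - m - 2) hp hpN (by omega)]
    _ = _ := by
        rw [← Int.cast_sub, periodThree_succ_sub,
          if_congr (show 3 ∣ N - m - 2 ↔ 3 ∣ p + (m + 1) by omega) rfl rfl]
        simp

theorem stmt2 (p : ℕ) (hp : p.Prime) (hp3 : 3 < p) (m : ℕ) (hm1 : 1 ≤ m)
    (hm : m < (p - 1) / 2) :
    ∑ j ∈ Finset.Icc 1 ((p - 1) / 2), (j : ZMod p)⁻¹ * Nat.choose (2 * j) (j + m) =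
      (m : ZMod p)⁻¹ * (1 - 3 * (if 3 ∣ p + m then 1 else 0)) :=
  stmt2_general p hp m hm1 hm
end

section
/- Let p > 3 be a prime. Then ∑_{k=0}^{p-1} (-1)^k T(k,0) ≡ p·(3·(p/3) - 1)/2 (mod p^2), where (p/3) is the Legendre symbol of p modulo 3 and T(k,0) is the central trinomial coefficient. -/
/-!
Write `U = 1 + X + X²`, so that `T(k,0) = [X^k] U^k`. The sum is then the coefficient of
`X^(p-1)` in the geometric sum `∑_{k<p} (-U)^k X^(p-1-k) = (X^p + U^p) / (U + X)`, and
`U + X = (1 + X)²`; expanding `(1 + X)⁻² = ∑ (-1)^j (j+1) X^j` turns it into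
`∑_{i<p} (-1)^i (p - i) u_i` with `u_i = [X^i] U^p`.

Modulo `p²`: for `0 < i < p` the coefficient `u_i` is divisible by `p` (Frobenius), and comparing
coefficients in `(1 - X)^p U^p = (1 - X³)^p` together with `i·C(p,i) ≡ (-1)^(i-1) p` gives
`i u_i ≡ p` if `3 ∤ i` and `i u_i ≡ -2p` if `3 ∣ i`. Hence `(-1)^i (p - i) u_i ≡ -(-1)^i i u_i`,
and summing these 6-periodic values gives `p` or `-2p` according as `p ≡ 1` or `2 (mod 3)`.
-/

open Polynomial Finset

theorem sum_range_add_one_mul_pow_mul_one_sub_sq {R : Type*} [CommRing R] (y : R) (n : ℕ) :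
    (∑ k ∈ range n, ((k : R) + 1) * y ^ k) * (1 - y) ^ 2 =
      1 - (n + 1) * y ^ n + n * y ^ (n + 1) := by
  induction n with
  | zero => simp
  | succ n ih => rw [sum_range_succ, add_mul, ih]; push_cast; ring

theorem sum_range_ite_dvd {M : Type*} [AddCommMonoid M] {k : ℕ} (hk : 0 < k) (f : ℕ → M)
    (n : ℕ) :
    ∑ i ∈ range n, (if k ∣ i then f i else 0) = ∑ t ∈ range ((n + k - 1) / k), f (k * t) := by
  induction n with
  | zero => rw [Nat.div_eq_of_lt (by omega)]; rfl
  | succ n ih =>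
    have hdiv : (n + 1 + k - 1) / k = (n + k - 1) / k + if k ∣ n then 1 else 0 := by
      rw [show n + 1 + k - 1 = n + k - 1 + 1 by omega, Nat.succ_div,
        show n + k - 1 + 1 = n + k by omega]
      simp only [Nat.dvd_add_self_right]
    rw [sum_range_succ, ih, hdiv]
    split_ifs with h
    · obtain ⟨c, rfl⟩ := h
      rw [sum_range_succ, show (k * c + k - 1) / k = c by
        rw [show k * c + k - 1 = k - 1 + k * c by omega, Nat.add_mul_div_left _ _ hk,
          Nat.div_eq_of_lt (by omega), zero_add]]
    · simp

namespace Polynomial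

variable {R : Type*} [CommRing R]

theorem coeff_neg_pow (f : R[X]) (k n : ℕ) :
    ((-f) ^ k).coeff n = (-1) ^ k * (f ^ k).coeff n := by
  rw [neg_pow, ← C_1, ← C_neg, ← C_pow, coeff_C_mul]

theorem coeff_one_sub_X_pow (n k : ℕ) :
    ((1 - X : R[X]) ^ n).coeff k = (-1) ^ k * n.choose k := by
  induction n generalizing k with
  | zero => cases k <;> simp [coeff_one]
  | succ n ih =>
    rw [pow_succ', sub_mul, one_mul, coeff_sub]
    cases k with
    | zero => simp [ih]
    | succ k => rw [coeff_X_mul, ih, ih, Nat.choose_succ_succ', pow_succ]; push_cast; ring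

theorem coeff_eq_sum_of_mul_one_add_X_sq {A B : R[X]} (h : A * (1 + X) ^ 2 = B) (n : ℕ) :
    A.coeff n = ∑ i ∈ range (n + 1), (-1) ^ (n - i) * ((n - i : ℕ) + 1 : R) * B.coeff i := by
  set G : R[X] := ∑ k ∈ range (n + 1), C ((-1) ^ k * ((k : R) + 1)) * X ^ k
  have hG : G * (1 + X) ^ 2 =
      1 - ((n : R[X]) + 2) * (-X) ^ (n + 1) + ((n : R[X]) + 1) * (-X) ^ (n + 2) := by
    have hG' : G = ∑ k ∈ range (n + 1), ((k : R[X]) + 1) * (-X) ^ k := by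
      refine sum_congr rfl fun k _ => ?_
      rw [neg_pow (X : R[X]), C_mul, C_pow, C_neg, C_1, C_add, C_1, C_eq_natCast]
      ring
    have := sum_range_add_one_mul_pow_mul_one_sub_sq (-X : R[X]) (n + 1)
    rw [← hG', sub_neg_eq_add, add_comm 1 X] at this
    rw [add_comm 1 X, this]
    push_cast
    ring
  have hA : A = B * G +
      X ^ (n + 1) * (A * (-1) ^ (n + 1) * (((n : R[X]) + 2) + ((n : R[X]) + 1) * X)) := by
    rw [← h]
    linear_combination (-A) * hG
  have hGcoeff : ∀ j ≤ n, G.coeff j = (-1) ^ j * (j + 1) := by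
    intro j hj
    simp only [G, finsetSum_coeff, coeff_C_mul_X_pow]
    rw [sum_ite_eq]
    simp [Nat.lt_succ_of_le hj]
  rw [hA, coeff_add, coeff_X_pow_mul', if_neg (by omega), add_zero, coeff_mul,
    Nat.sum_antidiagonal_eq_sum_range_succ_mk]
  refine sum_congr rfl fun i _ => ?_
  rw [hGcoeff _ (Nat.sub_le n i)]
  ring

end Polynomial

theorem sum_range_neg_one_pow_mul_trinomial_eq_sum_coeff (n : ℕ) :
    ∑ k ∈ range (n + 1), (-1) ^ k * _root_.trinomial k 0 =
      ∑ i ∈ range (n + 1),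
        (-1) ^ i * ((n + 1 - i : ℕ) : ℤ) * ((1 + X + X ^ 2 : ℤ[X]) ^ (n + 1)).coeff i := by
  set U : ℤ[X] := 1 + X + X ^ 2
  set A : ℤ[X] := ∑ k ∈ range (n + 1), (-U) ^ k * X ^ (n - k)
  have hA : A * (1 + X) ^ 2 = X ^ (n + 1) - (-U) ^ (n + 1) := by
    have := geom_sum₂_mul (-U) X (n + 1)
    simp only [Nat.add_sub_cancel] at this
    linear_combination -this
  have hAcoeff : A.coeff n = ∑ k ∈ range (n + 1), (-1) ^ k * _root_.trinomial k 0 := by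
    simp only [A, finsetSum_coeff]
    refine sum_congr rfl fun k hk => ?_
    rw [coeff_mul_X_pow', if_pos (Nat.sub_le n k),
      Nat.sub_sub_self (Nat.lt_succ_iff.1 (mem_range.1 hk)), coeff_neg_pow]
    rfl
  rw [← hAcoeff, coeff_eq_sum_of_mul_one_add_X_sq hA]
  refine sum_congr rfl fun i hi => ?_
  obtain ⟨d, rfl⟩ := Nat.exists_eq_add_of_le (Nat.lt_succ_iff.1 (mem_range.1 hi))
  rw [coeff_sub, coeff_X_pow, if_neg (by omega), coeff_neg_pow, Nat.add_sub_cancel_left,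
    show i + d + 1 - i = d + 1 by omega]
  have hsq : ((-1 : ℤ) ^ d) ^ 2 = 1 := by rw [← pow_mul, pow_mul']; norm_num
  push_cast
  linear_combination ((-1) ^ i * ((d : ℤ) + 1) * (U ^ (i + d + 1)).coeff i) * hsq

namespace ZMod

variable {p : ℕ}

theorem natCast_mul_intCast_eq_of_modEq {a b : ℤ} (h : a ≡ b [ZMOD p]) :
    (p * a : ZMod (p ^ 2)) = p * b := by
  have key : ((p * a : ℤ) : ZMod (p ^ 2)) = ((p * b : ℤ) : ZMod (p ^ 2)) := by
    rw [intCast_eq_intCast_iff_dvd_sub, ← mul_sub, Nat.cast_pow, pow_two]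
    exact mul_dvd_mul_left _ h.dvd
  exact_mod_cast key

theorem intCast_mul_eq_zero_of_dvd {a b : ℤ} (ha : (p : ℤ) ∣ a) (hb : (p : ℤ) ∣ b) :
    ((a * b : ℤ) : ZMod (p ^ 2)) = 0 := by
  rw [intCast_zmod_eq_zero_iff_dvd, Nat.cast_pow, pow_two]
  exact mul_dvd_mul ha hb

end ZMod

namespace Nat.Prime

variable {p : ℕ} (hp : p.Prime)
include hp

theorem dvd_coeff_pow_of_not_dvd (f : ℤ[X]) {k : ℕ} (hk : ¬p ∣ k) :
    (p : ℤ) ∣ (f ^ p).coeff k := by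
  have := Fact.mk hp
  rw [← ZMod.intCast_zmod_eq_zero_iff_dvd, ← eq_intCast (Int.castRingHom (ZMod p)),
    ← coeff_map, Polynomial.map_pow, ← ZMod.expand_card, coeff_expand hp.pos, if_neg hk]

theorem choose_sub_one_modEq {k : ℕ} (hk : k < p) :
    ((p - 1).choose k : ℤ) ≡ (-1) ^ k [ZMOD p] := by
  induction k with
  | zero => simp [Int.ModEq.refl]
  | succ k ih =>
    have hsucc : (p - 1).choose k + (p - 1).choose (k + 1) = p.choose (k + 1) := by
      rw [← Nat.choose_succ_succ', Nat.sub_add_cancel hp.one_le]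
    have hdvd : (p : ℤ) ∣ p.choose (k + 1) :=
      Int.natCast_dvd_natCast.2 (hp.dvd_choose_self k.succ_ne_zero hk)
    have ih := Int.modEq_iff_dvd.1 (ih (by omega))
    rw [Int.modEq_iff_dvd]
    have e : (-1 : ℤ) ^ (k + 1) - (p - 1).choose (k + 1) =
        -((-1) ^ k - (p - 1).choose k) - (p.choose (k + 1) : ℤ) := by
      rw [← hsucc]; push_cast; ring
    rw [e]
    exact ih.neg_right.sub hdvd

theorem neg_one_pow_mul_mul_choose {k : ℕ} (hk0 : 0 < k) (hk : k < p) :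
    ((-1) ^ k * k * p.choose k : ZMod (p ^ 2)) = -p := by
  obtain ⟨m, rfl⟩ := Nat.exists_eq_add_of_lt hk0
  have hchoose : (m + 1) * p.choose (m + 1) = p * (p - 1).choose m := by
    have := Nat.add_one_mul_choose_eq (p - 1) m
    rw [Nat.sub_add_cancel hp.one_le] at this
    rw [this]; ring
  have hmod := ZMod.natCast_mul_intCast_eq_of_modEq (hp.choose_sub_one_modEq (k := m) (by omega))
  push_cast at hmod
  rw [zero_add, mul_assoc, ← Nat.cast_mul, hchoose]
  push_cast
  rw [hmod]
  have hsq : ((-1 : ZMod (p ^ 2)) ^ m) ^ 2 = 1 := by rw [← pow_mul, pow_mul']; norm_num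
  linear_combination (-(p : ZMod (p ^ 2))) * hsq

theorem natCast_self_mul_coeff_pow {j : ℕ} (f : ℤ[X]) (hj0 : 0 < j) (hj : j < p) :
    (p * ((f ^ p).coeff j : ZMod (p ^ 2))) = 0 := by
  exact_mod_cast ZMod.intCast_mul_eq_zero_of_dvd dvd_rfl
    (hp.dvd_coeff_pow_of_not_dvd f (Nat.not_dvd_of_pos_of_lt hj0 hj))

theorem intCast_coeff_one_add_X_add_X_sq_pow {j : ℕ} (hj0 : 0 < j) (hj : j < p) :
    ((((1 + X + X ^ 2 : ℤ[X]) ^ p).coeff j : ℤ) : ZMod (p ^ 2)) =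
      (if 3 ∣ j then (-1) ^ (j / 3) * (p.choose (j / 3) : ZMod (p ^ 2)) else 0) -
        (-1) ^ j * (p.choose j : ZMod (p ^ 2)) := by
  have hprod : (1 - X) ^ p * (1 + X + X ^ 2) ^ p = expand ℤ 3 ((1 - X) ^ p) := by
    rw [← mul_pow, map_pow, map_sub, map_one, expand_X]; ring
  have hc := congrArg (coeff · j) hprod
  simp only [coeff_mul, Nat.sum_antidiagonal_eq_sum_range_succ_mk, coeff_expand three_pos,
    coeff_one_sub_X_pow] at hc
  set u := ((1 + X + X ^ 2 : ℤ[X]) ^ p).coeff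
  obtain ⟨m, rfl⟩ : ∃ m, j = m + 1 := ⟨j - 1, by omega⟩
  rw [sum_range_succ, sum_range_succ'] at hc
  have hmid : ((∑ a ∈ range m, (-1) ^ (a + 1) * (p.choose (a + 1) : ℤ) * u (m + 1 - (a + 1)) :
      ℤ) : ZMod (p ^ 2)) = 0 := by
    rw [Int.cast_sum]
    refine sum_eq_zero fun a ha => ?_
    have ha : a < m := mem_range.1 ha
    refine ZMod.intCast_mul_eq_zero_of_dvd (Dvd.dvd.mul_left ?_ _) ?_
    · exact Int.natCast_dvd_natCast.2 (hp.dvd_choose_self a.succ_ne_zero (by omega))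
    · exact hp.dvd_coeff_pow_of_not_dvd _ (Nat.not_dvd_of_pos_of_lt (by omega) (by omega))
  have hu0 : u 0 = 1 := by simp [u, coeff_zero_eq_eval_zero]
  have hcast := congrArg (Int.cast : ℤ → ZMod (p ^ 2)) hc
  push_cast at hcast hmid
  rw [hmid, Nat.sub_self, hu0, Nat.choose_zero_right] at hcast
  linear_combination hcast

theorem natCast_mul_coeff_one_add_X_add_X_sq_pow {j : ℕ} (hj0 : 0 < j) (hj : j < p) :
    (j * (((1 + X + X ^ 2 : ℤ[X]) ^ p).coeff j : ZMod (p ^ 2))) =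
      if 3 ∣ j then -2 * (p : ZMod (p ^ 2)) else p := by
  rw [hp.intCast_coeff_one_add_X_add_X_sq_pow hj0 hj]
  have hj' := hp.neg_one_pow_mul_mul_choose hj0 hj
  split_ifs with h3
  · obtain ⟨t, rfl⟩ := h3
    have ht := hp.neg_one_pow_mul_mul_choose (k := t) (by omega) (by omega)
    rw [Nat.mul_div_cancel_left t three_pos]
    push_cast at hj' ⊢
    linear_combination 3 * ht - hj'
  · linear_combination -hj'

theorem neg_one_pow_mul_sub_mul_coeff_one_add_X_add_X_sq_pow {i : ℕ} (hi : i < p) :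
    (-1) ^ i * ((p - i : ℕ) : ZMod (p ^ 2)) * (((1 + X + X ^ 2 : ℤ[X]) ^ p).coeff i : ℤ) =
      p * (3 * (if 3 ∣ i then (-1) ^ i else 0) - (-1) ^ i - if i = 0 then 1 else 0) := by
  rcases Nat.eq_zero_or_pos i with rfl | hi0
  · simp [coeff_zero_eq_eval_zero]
    ring
  have hpu := hp.natCast_self_mul_coeff_pow (1 + X + X ^ 2) hi0 hi
  have hiu := hp.natCast_mul_coeff_one_add_X_add_X_sq_pow hi0 hi
  rw [Nat.cast_sub hi.le, if_neg hi0.ne']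
  split_ifs at hiu ⊢ <;> linear_combination (-1) ^ i * (hpu - hiu)

theorem sum_range_neg_one_pow_mul_trinomial :
    ∑ k ∈ range p, (-1 : ZMod (p ^ 2)) ^ k * (_root_.trinomial k 0 : ZMod (p ^ 2)) =
      p * (3 * (if Even ((p + 2) / 3) then 0 else 1) - (if Even p then 0 else 1) - 1) := by
  have h := congrArg (Int.cast : ℤ → ZMod (p ^ 2))
    (sum_range_neg_one_pow_mul_trinomial_eq_sum_coeff (p - 1))
  rw [Nat.sub_add_cancel hp.one_le] at h
  push_cast at h
  rw [h, sum_congr rfl fun i hi =>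
      hp.neg_one_pow_mul_sub_mul_coeff_one_add_X_add_X_sq_pow (mem_range.1 hi),
    ← mul_sum, sum_sub_distrib, sum_sub_distrib, ← mul_sum, sum_range_ite_dvd three_pos,
    show p + 3 - 1 = p + 2 from rfl, sum_ite_eq' _ _ (fun _ => (1 : ZMod (p ^ 2))),
    if_pos (mem_range.2 hp.pos)]
  simp_rw [pow_mul]
  norm_num [neg_one_geom_sum]

end Nat.Prime

theorem stmt5 (p : ℕ) (hp : p.Prime) (hp3 : 3 < p) :
    (∑ k ∈ Finset.range p, (-1 : ZMod (p ^ 2)) ^ k * (trinomial k 0 : ZMod (p ^ 2))) =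
      (p : ZMod (p ^ 2)) * (((3 * legendreSym 3 p - 1) / 2 : ℤ) : ZMod (p ^ 2)) := by
  rw [hp.sum_range_neg_one_pow_mul_trinomial]
  have hp6 : p % 6 = 1 ∨ p % 6 = 5 := by
    have := hp.eq_one_or_self_of_dvd 2
    have := hp.eq_one_or_self_of_dvd 3
    omega
  rw [legendreSym.mod]
  rcases hp6 with h | h
  · rw [show (p : ℤ) % (3 : ℕ) = 1 by omega, legendreSym.at_one,
      if_neg (by rw [Nat.even_iff]; omega), if_neg (by rw [Nat.even_iff]; omega)]
    norm_num
  · rw [show (p : ℤ) % (3 : ℕ) = 2 by omega, legendreSym.at_two (by decide),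
      if_pos (by rw [Nat.even_iff]; omega), if_neg (by rw [Nat.even_iff]; omega)]
    norm_num
end

section
/- Let p > 3 be a prime. Then 3^{p-1}·∑_{k=0}^{p-1} 3^{p-1-k}·T(k,0) ≡ 3^{2(p-1)}·p (mod p^2) if p ≡ 1 (mod 3), and ≡ 0 (mod p^2) if p ≡ 2 (mod 3); equivalently, ∑_{k=0}^{p-1} T(k,0)/3^k ≡ p or 0 (mod p^2) respectively, where the division by 3^k is interpreted in Z/p^2Z (3 is invertible mod p^2). -/
/-!
With `Φ = 1 + X + X²`, the identity `Φ · (Φⁿ)' = n Φ' Φⁿ` together with the symmetry of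
the coefficients of `Φⁿ` gives the recurrence `(n+2) T_{n+2} = (2n+3) T_{n+1} + 3(n+1) T_n`,
which telescopes to `2 ∑_{k ≤ n} 3^{n-k} T_k = (n+1) (T_{n+1} + T_n)`. At `n = p - 1` the
right side is `p (T_p + T_{p-1})`, so only `T_p + T_{p-1}` modulo `p` matters. In
characteristic `p`, `Φ^p = 1 + X^p + X^{2p}`, so `T_p ≡ 1`, and `(1 - X³) Φ^{p-1} = (1 - X) Φ^p`
makes the coefficients of `Φ^{p-1}` below `X^p` periodic of period 3, so `T_{p-1} ≡ 1` or `-1`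
as `p ≡ 1` or `2 (mod 3)`. Finally `3^{p-1} ≡ 1 (mod p)` gives `p · 3^{p-1} = p` in `ZMod (p²)`.
-/

open Finset
open Polynomial hiding trinomial

section Coefficients

variable {R : Type*} [CommSemiring R]

local notation "Φ" => (1 + X + X ^ 2 : R[X])

theorem coeff_one_add_X_add_X_sq_mul_add_two (q : R[X]) (j : ℕ) :
    (Φ * q).coeff (j + 2) = q.coeff (j + 2) + q.coeff (j + 1) + q.coeff j := by
  simp [add_mul, pow_two, mul_assoc, coeff_X_mul]

theorem coeff_zero_one_add_X_add_X_sq_pow (n : ℕ) : (Φ ^ n).coeff 0 = 1 := by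
  simp [coeff_zero_eq_eval_zero]

theorem coeff_one_one_add_X_add_X_sq_pow (n : ℕ) : (Φ ^ n).coeff 1 = n := by
  have h := coeff_derivative (Φ ^ n) 0
  rw [derivative_pow, coeff_zero_eq_eval_zero] at h
  simpa using h.symm

theorem reflect_one_add_X_add_X_sq_pow (n : ℕ) : reflect (2 * n) (Φ ^ n) = Φ ^ n := by
  have hΦ : reflect 2 Φ = Φ := by
    ext i
    rcases i with _ | _ | _ | i <;>
      simp [coeff_reflect, revAt_le, revAt_eq_self_of_lt, coeff_X, coeff_one, coeff_X_pow]
  have hdeg : natDegree Φ ≤ 2 := by compute_degree!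
  induction n with
  | zero => simp
  | succ n ih =>
    rw [pow_succ, mul_add_one,
      reflect_mul _ _ ((natDegree_pow_le_of_le n hdeg).trans_eq (mul_comm _ _)) hdeg, ih, hΦ]

theorem coeff_one_add_X_add_X_sq_pow_symm {n k : ℕ} (hk : k ≤ 2 * n) :
    (Φ ^ n).coeff (2 * n - k) = (Φ ^ n).coeff k := by
  rw [← revAt_le hk, ← coeff_reflect, reflect_one_add_X_add_X_sq_pow]

theorem coeff_succ_one_add_X_add_X_sq_pow_succ (n : ℕ) :
    (Φ ^ (n + 1)).coeff (n + 1) = (Φ ^ n).coeff n + 2 * (Φ ^ n).coeff (n + 1) := by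
  rcases n with _ | n
  · simp [coeff_X, coeff_one]
  · rw [pow_succ', coeff_one_add_X_add_X_sq_mul_add_two,
      ← coeff_one_add_X_add_X_sq_pow_symm (n := n + 1) (k := n) (by omega),
      show 2 * (n + 1) - n = n + 2 by omega]
    ring

theorem coeff_X_mul_derivative (q : R[X]) (j : ℕ) :
    (X * derivative q).coeff j = j * q.coeff j := by
  rcases j with _ | j
  · simp
  · rw [coeff_X_mul, coeff_derivative]; push_cast; ring

theorem one_add_X_add_X_sq_mul_derivative_pow (n : ℕ) :
    Φ * derivative (Φ ^ n) = C (n : R) * Φ ^ n * derivative Φ := by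
  rcases n with _ | n
  · simp
  · rw [derivative_pow_succ, pow_succ', Nat.cast_succ]; ring

end Coefficients

section RingCoefficients

variable {R : Type*} [CommRing R]

local notation "Φ" => (1 + X + X ^ 2 : R[X])

theorem coeff_one_add_X_add_X_sq_pow_derivative_relation (n j : ℕ) :
    ((j : R) + 2) * (Φ ^ n).coeff (j + 2) + (j + 1) * (Φ ^ n).coeff (j + 1)
      + j * (Φ ^ n).coeff j = n * ((Φ ^ n).coeff (j + 1) + 2 * (Φ ^ n).coeff j) := by
  have h := congrArg (fun q => (X * q).coeff (j + 2))
    (one_add_X_add_X_sq_mul_derivative_pow (R := R) n)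
  have hrhs : X * (C (n : R) * Φ ^ n * derivative Φ)
      = C (n : R) * (Φ ^ n * X) + C (2 * n : R) * (Φ ^ n * X ^ 2) := by
    rw [C_mul, derivative_add, derivative_add, derivative_one, derivative_X,
      derivative_X_sq]
    ring
  simp only [mul_left_comm X Φ, coeff_one_add_X_add_X_sq_mul_add_two, coeff_X_mul_derivative, hrhs,
    coeff_add, coeff_C_mul, coeff_mul_X, coeff_mul_X_pow] at h
  push_cast at h
  linear_combination h

theorem intCast_trinomial (n m : ℕ) : (trinomial n m : R) = (Φ ^ n).coeff (n + m) := by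
  rw [trinomial, ← eq_intCast (Int.castRingHom R), ← coeff_map]
  simp

end RingCoefficients

theorem trinomial_recurrence (m : ℕ) :
    ((m : ℤ) + 2) * trinomial (m + 2) 0
      = (2 * m + 3) * trinomial (m + 1) 0 + 3 * (m + 1) * trinomial m 0 := by
  have h₁ := coeff_succ_one_add_X_add_X_sq_pow_succ (R := ℤ) m
  have h₂ := coeff_succ_one_add_X_add_X_sq_pow_succ (R := ℤ) (m + 1)
  have h₃ := coeff_one_add_X_add_X_sq_mul_add_two ((1 + X + X ^ 2 : ℤ[X]) ^ m) m
  have h₄ := coeff_one_add_X_add_X_sq_pow_derivative_relation (R := ℤ) m m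
  rw [← pow_succ'] at h₃
  simp only [trinomial, add_zero]
  linear_combination (m + 2) * h₂ - (m + 1) * h₁ + 2 * (m + 2) * h₃ + 2 * h₄

theorem two_mul_three_pow_mul_sum_trinomial {R : Type*} [CommRing R] {y : R} (hy : 3 * y = 1)
    (n : ℕ) :
    2 * 3 ^ n * ∑ k ∈ range (n + 1), (trinomial k 0 : R) * y ^ k
      = ((n + 1 : ℕ) : R) * (trinomial (n + 1) 0 + trinomial n 0) := by
  induction n with
  | zero => norm_num [intCast_trinomial, coeff_X, coeff_one]
  | succ n ih =>
    have hrec := congrArg (Int.cast : ℤ → R) (trinomial_recurrence n)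
    have hy' : (3 * y) ^ (n + 1) = 1 := by rw [hy, one_pow]
    rw [sum_range_succ]
    push_cast at ih hrec ⊢
    linear_combination 3 * ih + 2 * (trinomial (n + 1) 0 : R) * hy' - hrec

section CharP

variable {R : Type*} [CommRing R] (p : ℕ) [hp : Fact p.Prime] [CharP R p]

local notation "Φ" => (1 + X + X ^ 2 : R[X])

theorem one_add_X_add_X_sq_pow_char : Φ ^ p = 1 + X ^ p + X ^ (2 * p) := by
  rw [add_pow_char, add_pow_char, one_pow, ← pow_mul, mul_comm]

theorem coeff_one_add_X_add_X_sq_pow_char_self : (Φ ^ p).coeff p = 1 := by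
  have hpos := hp.out.pos
  rw [one_add_X_add_X_sq_pow_char]
  simp [coeff_X_pow, coeff_one, hpos.ne', show p ≠ 2 * p by omega]

theorem coeff_one_add_X_add_X_sq_pow_pred_add_three {j : ℕ} (hj : j + 3 < p) :
    (Φ ^ (p - 1)).coeff (j + 3) = (Φ ^ (p - 1)).coeff j := by
  have h : (1 - X ^ 3) * Φ ^ (p - 1) = (1 - X) * (1 + X ^ p + X ^ (2 * p)) := by
    rw [← one_add_X_add_X_sq_pow_char, show (1 - X ^ 3 : R[X]) = (1 - X) * Φ by ring, mul_assoc,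
      ← pow_succ', Nat.sub_add_cancel hp.out.one_le]
  have h' := congrArg (coeff · (j + 3)) h
  simpa [sub_mul, mul_add, coeff_X_pow_mul', coeff_one, coeff_X_pow, coeff_X, sub_eq_zero,
    show j + 3 ≠ p by omega, show j + 2 ≠ p by omega, show j + 3 ≠ 2 * p by omega,
    show j + 2 ≠ 2 * p by omega] using h'

theorem coeff_one_add_X_add_X_sq_pow_pred_mod_three {k : ℕ} (hk : k < p) :
    (Φ ^ (p - 1)).coeff k = (Φ ^ (p - 1)).coeff (k % 3) := by
  suffices ∀ q r, r + 3 * q < p → (Φ ^ (p - 1)).coeff (r + 3 * q) = (Φ ^ (p - 1)).coeff r by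
    simpa [Nat.mod_add_div] using this (k / 3) (k % 3) (by omega)
  intro q r hq
  induction q with
  | zero => rfl
  | succ q ih =>
    rw [show r + 3 * (q + 1) = r + 3 * q + 3 by ring,
      coeff_one_add_X_add_X_sq_pow_pred_add_three p (j := r + 3 * q) (by omega), ih (by omega)]

theorem coeff_pred_one_add_X_add_X_sq_pow_pred (h3 : p % 3 ≠ 0) :
    (Φ ^ (p - 1)).coeff (p - 1) = if p % 3 = 1 then 1 else -1 := by
  have hpos := hp.out.pos
  rw [coeff_one_add_X_add_X_sq_pow_pred_mod_three p (Nat.sub_lt hpos one_pos)]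
  split_ifs with h1
  · rw [show (p - 1) % 3 = 0 by omega, coeff_zero_one_add_X_add_X_sq_pow]
  · rw [show (p - 1) % 3 = 1 by omega, coeff_one_one_add_X_add_X_sq_pow, Nat.cast_pred hpos,
      CharP.cast_eq_zero, zero_sub]

end CharP

theorem intCast_trinomial_add_trinomial_pred {p : ℕ} [Fact p.Prime] (h3 : p % 3 ≠ 0) :
    ((trinomial p 0 + trinomial (p - 1) 0 : ℤ) : ZMod p) = if p % 3 = 1 then 2 else 0 := by
  push_cast
  rw [intCast_trinomial, intCast_trinomial, add_zero, add_zero,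
    coeff_one_add_X_add_X_sq_pow_char_self, coeff_pred_one_add_X_add_X_sq_pow_pred p h3]
  split_ifs <;> norm_num

theorem ZMod.natCast_mul_intCast_eq_of_intCast_eq {p : ℕ} {a b : ℤ} (h : (a : ZMod p) = b) :
    (p : ZMod (p ^ 2)) * a = p * b := by
  have h' := (ZMod.intCast_eq_intCast_iff _ _ p).1 h
  exact_mod_cast (ZMod.intCast_eq_intCast_iff (p * a) (p * b) (p ^ 2)).2
    (by rw [Nat.cast_pow, sq]; exact h'.mul_left')

theorem stmt8 (p : ℕ) (hp : p.Prime) (hp3 : 3 < p) :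
    (∑ k ∈ Finset.range p, (trinomial k 0 : ZMod (p ^ 2)) * ((3 : ZMod (p ^ 2))⁻¹) ^ k) =
      if p % 3 = 1 then (p : ZMod (p ^ 2)) else 0 := by
  have := Fact.mk hp
  have hcoprime : ∀ q : ℕ, q.Prime → q < p → q.Coprime p := fun q hq hqp =>
    (Nat.coprime_primes hq hp).2 hqp.ne
  have h3 : IsUnit (3 : ZMod (p ^ 2)) := by
    exact_mod_cast (ZMod.isUnit_iff_coprime 3 _).2 ((hcoprime 3 Nat.prime_three hp3).pow_right 2)
  have hu : IsUnit (2 * 3 ^ (p - 1) : ZMod (p ^ 2)) := by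
    refine IsUnit.mul ?_ (h3.pow _)
    exact_mod_cast (ZMod.isUnit_iff_coprime 2 _).2
      ((hcoprime 2 Nat.prime_two (by omega)).pow_right 2)
  have hfermat : (3 : ZMod p) ^ (p - 1) = 1 := by
    exact_mod_cast (ZMod.intCast_eq_intCast_iff _ _ p).2 (Int.ModEq.pow_card_sub_one_eq_one hp
      (n := 3) (Nat.isCoprime_iff_coprime.2 (hcoprime 3 Nat.prime_three hp3)))
  have hmod : ((trinomial p 0 + trinomial (p - 1) 0 : ℤ) : ZMod p)
      = ((2 * 3 ^ (p - 1) * if p % 3 = 1 then 1 else 0 : ℤ) : ZMod p) := by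
    have h3p : p % 3 ≠ 0 := fun h => (Nat.Prime.coprime_iff_not_dvd Nat.prime_three).1
      (hcoprime 3 Nat.prime_three hp3) (Nat.dvd_of_mod_eq_zero h)
    rw [intCast_trinomial_add_trinomial_pred h3p]
    push_cast
    split_ifs <;> simp [hfermat]
  have hsum := two_mul_three_pow_mul_sum_trinomial (ZMod.mul_inv_of_unit _ h3) (p - 1)
  rw [Nat.sub_add_cancel hp.one_le] at hsum
  have hlift := ZMod.natCast_mul_intCast_eq_of_intCast_eq hmod
  push_cast at hlift
  apply hu.mul_left_cancel
  rw [hsum, hlift]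
  split_ifs <;> ring
end

section
/- Let p > 3 be a prime. Then ∑_{k=0}^{p-1} C_k ≡ (3·(p/3) - 1)/2 (mod p), where C_k = C(2k,k)/(k+1) is the k-th Catalan number and (p/3) is the Legendre symbol. -/
/-!
With `B_k = centralBinom k`, the recurrences `(k+1) C_k = B_k` and `(k+1) B_{k+1} = 2(2k+1) B_k`
give `2 C_k = 4 B_k - B_{k+1}`, which telescopes to `2 ∑_{k<p} C_k = 3 ∑_{k<p} B_k - B_p + 1`.
Modulo `p = 2n+1`, `B_k ≡ (-4)^k C(n,k)` for `k ≤ n` and `p ∣ B_k` for `n < k < p`, so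
`∑_{k<p} B_k ≡ (1-4)^n = (-3)^n`, which is `(-3/p) = (p/3)` by Euler's criterion and quadratic
reciprocity; and `B_p ≡ C(0,0) C(2,1) = 2` by Lucas' theorem.
-/

open Finset Nat

lemma two_mul_catalan_eq (k : ℕ) :
    (2 * catalan k : ℤ) = 4 * centralBinom k - centralBinom (k + 1) := by
  have h₁ : ((k : ℤ) + 1) * catalan k = centralBinom k :=
    mod_cast succ_mul_catalan_eq_centralBinom k
  have h₂ : ((k : ℤ) + 1) * centralBinom (k + 1) = 2 * (2 * k + 1) * centralBinom k :=
    mod_cast succ_mul_centralBinom_succ k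
  refine mul_left_cancel₀ (show (k : ℤ) + 1 ≠ 0 by positivity) ?_
  linear_combination 2 * h₁ + h₂

lemma two_mul_sum_range_catalan (m : ℕ) :
    (2 * ∑ k ∈ range m, catalan k : ℤ) =
      3 * ∑ k ∈ range m, centralBinom k - centralBinom m + 1 := by
  induction m with
  | zero => simp
  | succ m ih =>
    simp only [sum_range_succ, Nat.cast_add]
    linear_combination ih + two_mul_catalan_eq m

section ZModPrime

variable {p : ℕ} [Fact p.Prime]

lemma centralBinom_prime_eq_two : (centralBinom p : ZMod p) = 2 := by
  have hp := (Fact.out : p.Prime).pos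
  have h := (ZMod.intCast_eq_intCast_iff _ _ _).mpr
    (Choose.choose_modEq_choose_mod_mul_choose_div (n := 2 * p) (k := p) (p := p))
  simp only [Int.cast_natCast, mul_mod_left, mod_self, choose_self, Nat.mul_div_cancel _ hp,
    Nat.div_self hp, choose_succ_self_right] at h
  simpa [centralBinom] using h

lemma centralBinom_eq_zero_of_le_two_mul_of_lt (k : ℕ) (hpk : p ≤ 2 * k) (hkp : k < p) :
    (centralBinom k : ZMod p) = 0 :=
  (ZMod.natCast_eq_zero_iff _ _).mpr ((Fact.out : p.Prime).dvd_choose hkp (by omega) hpk)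

-- `centralBinom k = (-4) ^ k * choose (-1/2) k`, and `n ≡ -1/2 (mod p)`.
lemma centralBinom_eq_neg_four_pow_mul_choose {n : ℕ} (hpn : 2 * n + 1 = p) {k : ℕ}
    (hk : k ≤ n) :
    (centralBinom k : ZMod p) = (-4) ^ k * n.choose k := by
  induction k with
  | zero => simp
  | succ k ih =>
    have hk' : k ≤ n := by omega
    have hne : ((k + 1 : ℕ) : ZMod p) ≠ 0 :=
      (ZMod.natCast_eq_zero_iff _ _).not.mpr (Nat.not_dvd_of_pos_of_lt (by omega) (by omega))
    have hp0 : ((2 * n + 1 : ℕ) : ZMod p) = 0 := by rw [hpn, ZMod.natCast_self]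
    have hB : ((k + 1 : ℕ) : ZMod p) * centralBinom (k + 1) =
        2 * (2 * k + 1) * centralBinom k :=
      mod_cast congrArg (Nat.cast : ℕ → ZMod p) (succ_mul_centralBinom_succ k)
    have hC : ((n.choose (k + 1) * (k + 1) : ℕ) : ZMod p) = (n.choose k * (n - k) : ℕ) :=
      congrArg _ (choose_succ_right_eq n k)
    push_cast [Nat.cast_sub hk'] at hne hp0 hB hC ⊢
    refine mul_left_cancel₀ hne ?_
    rw [hB, ih hk']
    linear_combination (2 * (-4 : ZMod p) ^ k * n.choose k) * hp0 - (-4) ^ (k + 1) * hC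

lemma legendreSym_neg_eq_of_mod_four_eq_three {q : ℕ} [Fact q.Prime] (hp : p ≠ 2)
    (hq : q % 4 = 3) : legendreSym p (-q) = legendreSym q p := by
  have hodd : Odd (q / 2) := Nat.odd_iff.mpr (by omega)
  have hqr := legendreSym.quadratic_reciprocity' hp (show q ≠ 2 by omega)
  have hp1 : p % 2 = 1 := Nat.odd_iff.mp ((Fact.out : p.Prime).odd_of_ne_two hp)
  rw [pow_mul', hodd.neg_one_pow] at hqr
  rw [neg_eq_neg_one_mul, legendreSym.mul, legendreSym.at_neg_one hp,
    ZMod.χ₄_eq_neg_one_pow hp1, hqr]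

lemma sum_range_centralBinom_prime (hp : p ≠ 2) :
    ∑ k ∈ range p, (centralBinom k : ZMod p) = (-3) ^ (p / 2) := by
  have hpn : 2 * (p / 2) + 1 = p := by
    have := Nat.odd_iff.mp ((Fact.out : p.Prime).odd_of_ne_two hp); omega
  rw [← sum_subset (range_subset_range.mpr (show p / 2 + 1 ≤ p by omega)) fun k hkp hkn => by
    simp only [mem_range, not_lt] at hkp hkn
    exact centralBinom_eq_zero_of_le_two_mul_of_lt k (by omega) hkp]
  rw [sum_congr rfl fun k hk =>
      centralBinom_eq_neg_four_pow_mul_choose hpn (mem_range_succ_iff.mp hk),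
    show (-3 : ZMod p) = -4 + 1 by norm_num, add_pow]
  simp

lemma legendreSym_three_eq_neg_three_pow (hp : p ≠ 2) :
    (legendreSym 3 p : ZMod p) = (-3) ^ (p / 2) := by
  rw [← legendreSym_neg_eq_of_mod_four_eq_three hp (by norm_num), legendreSym.eq_pow]
  push_cast
  rfl

end ZModPrime

theorem stmt9 (p : ℕ) (hp : p.Prime) (hp3 : 3 < p) :
    (∑ k ∈ Finset.range p, (catalan k : ZMod p)) =
      (((3 * legendreSym 3 p - 1) / 2 : ℤ) : ZMod p) := by
  have := Fact.mk hp
  have hp2 : p ≠ 2 := by omega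
  have h2C : 2 * ∑ k ∈ range p, (catalan k : ZMod p) = 3 * legendreSym 3 p - 1 := by
    have h := congrArg (Int.cast : ℤ → ZMod p) (two_mul_sum_range_catalan p)
    push_cast at h
    rw [h, sum_range_centralBinom_prime hp2, centralBinom_prime_eq_two,
      legendreSym_three_eq_neg_three_pow hp2]
    ring
  have h2 : (2 : ZMod p) ≠ 0 := by
    exact_mod_cast (ZMod.natCast_eq_zero_iff 2 p).not.mpr
      (Nat.not_dvd_of_pos_of_lt two_pos (by omega))
  have hL : legendreSym 3 p = 1 ∨ legendreSym 3 p = -1 := by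
    refine legendreSym.eq_one_or_neg_one 3 fun h => ?_
    rw [Int.cast_natCast, ZMod.natCast_eq_zero_iff,
      Nat.prime_dvd_prime_iff_eq Nat.prime_three hp] at h
    omega
  refine mul_left_cancel₀ h2 ?_
  rcases hL with hL | hL <;> rw [hL] at h2C ⊢ <;> norm_num at h2C ⊢ <;> linear_combination h2C
end

section
/- Let p > 3 be a prime. Then the Catalan number C_{p-1} = (1/p)·C(2p-2, p-1) satisfies C_{p-1} ≡ -1 (mod p), and C_k ≡ 0 (mod p) for all k with (p-1)/2 < k < p-1. -/
/-!
From `(k + 1) C_k = binom(2k, k)`: for `k < p ≤ 2k` the prime `p` divides `(2k)!` but not `k!²`,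
so `p ∣ C_k` as soon as also `k + 1 < p`. For `k = p - 1` the factor `k + 1 = p` cannot be cancelled;
instead `C_k = binom(2k, k) - binom(2k, k + 1)`, whose first term vanishes mod `p`, while by Lucas
`binom(2p - 2, p) ≡ ⌊(2p - 2) / p⌋ = 1`.
-/

open Nat

theorem catalan_add_choose_succ_eq_centralBinom (n : ℕ) :
    catalan n + (2 * n).choose (n + 1) = n.centralBinom := by
  have hchoose : (2 * n).choose (n + 1) * (n + 1) = n.centralBinom * n := by
    rw [choose_succ_right_eq, centralBinom_eq_two_mul_choose]
    congr 1
    omega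
  apply Nat.eq_of_mul_eq_mul_left (Nat.add_one_pos n)
  rw [mul_add, succ_mul_catalan_eq_centralBinom, mul_comm _ ((2 * n).choose _), hchoose]
  ring

theorem Nat.choose_prime_modEq_div {p : ℕ} [hp : Fact p.Prime] (n : ℕ) :
    n.choose p ≡ n / p [MOD p] := by
  simpa [Nat.div_self hp.out.pos] using
    Choose.choose_modEq_choose_mod_mul_choose_div_nat (n := n) (k := p) (p := p)

theorem Nat.Prime.dvd_centralBinom {p k : ℕ} (hp : p.Prime) (hkp : k < p) (hpk : p ≤ 2 * k) :
    p ∣ k.centralBinom := by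
  rw [centralBinom_eq_two_mul_choose, two_mul]
  exact hp.dvd_choose_add hkp hkp (by omega)

theorem Nat.Prime.dvd_catalan {p k : ℕ} (hp : p.Prime) (hkp : k + 1 < p) (hpk : p ≤ 2 * k) :
    p ∣ catalan k := by
  have hcop : p.Coprime (k + 1) :=
    (hp.coprime_iff_not_dvd).2 (Nat.not_dvd_of_pos_of_lt k.succ_pos hkp)
  refine hcop.dvd_of_dvd_mul_left ?_
  rw [succ_mul_catalan_eq_centralBinom]
  exact hp.dvd_centralBinom (by omega) hpk

theorem stmt11_general (p : ℕ) (hp : p.Prime) :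
    (catalan (p - 1) : ZMod p) = -1 ∧
      ∀ k : ℕ, (p - 1) / 2 < k → k < p - 1 → (catalan k : ZMod p) = 0 := by
  have := Fact.mk hp
  have h2 := hp.two_le
  refine ⟨?_, fun k hk hkp ↦
    (ZMod.natCast_eq_zero_iff _ _).2 (hp.dvd_catalan (by omega) (by omega))⟩
  have hcentral : ((p - 1).centralBinom : ZMod p) = 0 :=
    (ZMod.natCast_eq_zero_iff _ _).2 (hp.dvd_centralBinom (by omega) (by omega))
  have hchoose : ((2 * (p - 1)).choose p : ZMod p) = 1 := by
    rw [(ZMod.natCast_eq_natCast_iff _ _ _).2 (Nat.choose_prime_modEq_div _),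
      Nat.div_eq_of_lt_le (k := 1) (by omega) (by omega), cast_one]
  have key := congrArg (Nat.cast : ℕ → ZMod p) (catalan_add_choose_succ_eq_centralBinom (p - 1))
  rw [Nat.sub_add_cancel hp.one_le, cast_add, hchoose, hcentral] at key
  exact eq_neg_of_add_eq_zero_left key

theorem stmt11 (p : ℕ) (hp : p.Prime) (hp3 : 3 < p) :
    (catalan (p - 1) : ZMod p) = -1 ∧
      ∀ k : ℕ, (p - 1) / 2 < k → k < p - 1 → (catalan k : ZMod p) = 0 :=
  stmt11_general p hp
end

section
/- Let p > 3 be a prime and d an integer with 0 ≤ d < p-2. Then ∑_{k=0}^{p-1} (-1)^k T(k,d) = (-1)^{d-1}·d + ∑_{k=d+1}^{⌊(p+d-1)/2⌋} C(p,k)·C(p-k-2, p+d-1-2k), an exact identity in ℤ. -/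
open Polynomial Finset

section CommRing

variable {R : Type*} [CommRing R]

lemma Odd.geom_sum₂_neg_mul_add {n : ℕ} (hn : Odd n) (x y : R) :
    (∑ i ∈ range n, (-x) ^ i * y ^ (n - 1 - i)) * (x + y) = x ^ n + y ^ n := by
  have h := geom_sum₂_mul (-x) y n
  rw [hn.neg_pow] at h
  linear_combination -h

lemma add_pow_succ_eq_sq_mul_add (x y : R) (n : ℕ) :
    (x + y) ^ (n + 1) =
      y ^ 2 * ∑ k ∈ range n, ((n + 1).choose k : R) * x ^ k * y ^ (n - 1 - k) +
        (n + 1) * x ^ n * y + x ^ (n + 1) := by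
  rw [add_pow, sum_range_succ, sum_range_succ, mul_sum]
  congr 2
  · refine sum_congr rfl fun k hk => ?_
    rw [show n + 1 - k = n - 1 - k + 2 by grind]
    ring
  · rw [Nat.choose_succ_self_right, Nat.add_sub_cancel_left, pow_one]
    push_cast
    ring
  · simp

lemma sq_add_one_mul_sum_neg_one_pow_mul (x : R) (m : ℕ) :
    (x + 1) ^ 2 * ∑ j ∈ range m, (-1) ^ j * (j + 1) * x ^ j =
      1 - (-1) ^ m * (m + 1) * x ^ m - (-1) ^ m * m * x ^ (m + 1) := by
  induction m with
  | zero => simp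
  | succ m ih =>
    rw [sum_range_succ, mul_add, ih]
    push_cast
    ring

lemma sum_neg_pow_mul_X_pow_eq {n : ℕ} (hn : Odd n) :
    ∑ k ∈ range n, (-(1 + X + X ^ 2 : R[X])) ^ k * X ^ (n - 1 - k) =
      ∑ k ∈ range (n - 1), (n.choose k : R[X]) * (X ^ 2) ^ k * (X + 1) ^ (n - k - 2) +
        X ^ n * ∑ j ∈ range (n - 1), C ((-1) ^ j * (j + 1 : R)) * X ^ j +
          (n : R[X]) * X ^ (2 * n - 2) := by
  obtain ⟨t, rfl⟩ := hn
  refine ((monic_X_add_C (1 : R)).pow 2).isRegular.left ?_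
  simp only [map_one, Nat.add_sub_cancel, show 2 * (2 * t + 1) - 2 = 4 * t by omega]
  have hgeom := (odd_two_mul_add_one t).geom_sum₂_neg_mul_add (1 + X + X ^ 2 : R[X]) X
  have hbinom := add_pow_succ_eq_sq_mul_add (X ^ 2 : R[X]) (X + 1) (2 * t)
  have hinv := sq_add_one_mul_sum_neg_one_pow_mul (X : R[X]) (2 * t)
  rw [Nat.add_sub_cancel] at hgeom
  rw [(even_two_mul t).neg_one_pow] at hinv
  have hP : ∑ k ∈ range (2 * t),
        ((2 * t + 1).choose k : R[X]) * (X ^ 2) ^ k * (X + 1) ^ (2 * t + 1 - k - 2) =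
      ∑ k ∈ range (2 * t),
        ((2 * t + 1).choose k : R[X]) * (X ^ 2) ^ k * (X + 1) ^ (2 * t - 1 - k) :=
    sum_congr rfl fun k _ => by rw [show 2 * t + 1 - k - 2 = 2 * t - 1 - k by omega]
  have hG : ∑ j ∈ range (2 * t), C ((-1) ^ j * (j + 1 : R)) * X ^ j
      = ∑ j ∈ range (2 * t), (-1) ^ j * (j + 1) * X ^ j := by
    simp only [map_mul, map_pow, map_neg, map_one, map_add, map_natCast]
  rw [hP, hG]
  push_cast at hbinom hinv ⊢
  linear_combination hgeom + hbinom - X ^ (2 * t + 1) * hinv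

end CommRing

lemma coeff_sum_neg_pow_mul_X_pow (n d : ℕ) :
    (∑ k ∈ range n, (-(1 + X + X ^ 2 : ℤ[X])) ^ k * X ^ (n - 1 - k)).coeff (n - 1 + d) =
      ∑ k ∈ range n, (-1) ^ k * trinomial k d := by
  rw [finsetSum_coeff]
  refine sum_congr rfl fun k hk => ?_
  rw [mem_range] at hk
  rw [coeff_mul_X_pow', if_pos (by omega), show n - 1 + d - (n - 1 - k) = k + d by omega,
    neg_pow, ← C_1, ← C_neg, ← C_pow, coeff_C_mul]
  rfl

lemma coeff_sum_choose_mul_X_sq_pow_mul {n d : ℕ} (hd : d + 1 < n) :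
    (∑ k ∈ range (n - 1), (n.choose k : ℤ[X]) * (X ^ 2) ^ k * (X + 1) ^ (n - k - 2)).coeff
        (n - 1 + d) =
      ∑ k ∈ Icc (d + 1) ((n + d - 1) / 2),
        (n.choose k : ℤ) * (n - k - 2).choose (n + d - 1 - 2 * k) := by
  have hterm : ∀ k,
      ((n.choose k : ℤ[X]) * (X ^ 2) ^ k * (X + 1) ^ (n - k - 2)).coeff (n - 1 + d) =
        n.choose k *
          if 2 * k ≤ n - 1 + d then ((n - k - 2).choose (n - 1 + d - 2 * k) : ℤ) else 0 := by
    intro k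
    rw [mul_assoc, coeff_natCast_mul, ← pow_mul, coeff_X_pow_mul', mul_comm 2 k]
    split_ifs <;> simp [coeff_X_add_one_pow]
  rw [finsetSum_coeff, sum_congr rfl fun k _ => hterm k]
  symm
  refine sum_subset_zero_on_sdiff (fun k hk => ?_) (fun k hk => ?_) (fun k hk => ?_)
  · simp only [mem_Icc, mem_range] at hk ⊢
    omega
  · simp only [mem_sdiff, mem_Icc, mem_range] at hk
    split_ifs with h
    · rw [Nat.choose_eq_zero_of_lt (n := n - k - 2) (by omega), Nat.cast_zero, mul_zero]
    · rw [mul_zero]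
  · simp only [mem_Icc] at hk
    rw [if_pos (by omega), show n - 1 + d - 2 * k = n + d - 1 - 2 * k by omega]

lemma coeff_X_pow_mul_sum_neg_one_pow_mul {n d : ℕ} (hd : d < n) :
    (X ^ n * ∑ j ∈ range (n - 1), C ((-1) ^ j * (j + 1 : ℤ)) * X ^ j).coeff (n - 1 + d) =
      (-1 : ℤ) ^ (d + 1) * d := by
  rw [coeff_X_pow_mul']
  rcases d with _ | i
  · rw [if_neg (by omega), Nat.cast_zero, mul_zero]
  · rw [if_pos (by omega), show n - 1 + (i + 1) - n = i by omega, finsetSum_coeff]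
    simp only [coeff_C_mul_X_pow]
    rw [sum_ite_eq, if_pos (mem_range.2 (by omega))]
    push_cast
    ring

theorem sum_range_neg_one_pow_mul_trinomial {n d : ℕ} (hn : Odd n) (hd : d + 1 < n) :
    ∑ k ∈ range n, (-1 : ℤ) ^ k * trinomial k d =
      (-1 : ℤ) ^ (d + 1) * d +
        ∑ k ∈ Icc (d + 1) ((n + d - 1) / 2),
          (n.choose k : ℤ) * (n - k - 2).choose (n + d - 1 - 2 * k) := by
  have h := congrArg (coeff · (n - 1 + d)) (sum_neg_pow_mul_X_pow_eq (R := ℤ) hn)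
  simp only [coeff_add] at h
  rw [coeff_sum_neg_pow_mul_X_pow, coeff_sum_choose_mul_X_sq_pow_mul hd,
    coeff_X_pow_mul_sum_neg_one_pow_mul (by omega), coeff_natCast_mul, coeff_X_pow,
    if_neg (by omega)] at h
  rw [h]
  ring

theorem stmt15_general (p : ℕ) (hp : p.Prime) (d : ℕ) (hd : d < p - 2) :
    ∑ k ∈ Finset.range p, (-1 : ℤ) ^ k * trinomial k d =
      (-1 : ℤ) ^ (d + 1) * d +
        ∑ k ∈ Finset.Icc (d + 1) ((p + d - 1) / 2),
          (Nat.choose p k : ℤ) * Nat.choose (p - k - 2) (p + d - 1 - 2 * k) :=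
  sum_range_neg_one_pow_mul_trinomial (hp.odd_of_ne_two (by omega)) (by omega)

theorem stmt15 (p : ℕ) (hp : p.Prime) (hp3 : 3 < p) (d : ℕ) (hd : d < p - 2) :
    ∑ k ∈ Finset.range p, (-1 : ℤ) ^ k * trinomial k d =
      (-1 : ℤ) ^ (d + 1) * d +
        ∑ k ∈ Finset.Icc (d + 1) ((p + d - 1) / 2),
          (Nat.choose p k : ℤ) * Nat.choose (p - k - 2) (p + d - 1 - 2 * k) :=
  stmt15_general p hp d hd
end

section
/- Let p > 3 be a prime and 0 < k < p/3. Then C(2p-3k, p-1-3k) ≡ -3k (mod p). -/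
theorem stmt17 (p : ℕ) (hp : p.Prime) (hp3 : 3 < p) (k : ℕ) (hk1 : 0 < k)
    (hk2 : 3 * k < p) :
    ((Nat.choose (2 * p - 3 * k) (p - 1 - 3 * k) : ℕ) : ZMod p) = -3 * k := by
  haveI : Fact p.Prime := ⟨hp⟩
  set m := p - 3 * k with hm
  have hmlt : m < p := by omega
  have hn : 2 * p - 3 * k = p + m := by omega
  have hr : p - 1 - 3 * k = m - 1 := by omega
  have hlucas := (Choose.choose_modEq_choose_mod_mul_choose_div_nat
    (p := p) (n := 2 * p - 3 * k) (k := p - 1 - 3 * k))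
  have hnm : (2 * p - 3 * k) % p = m := by
    rw [hn, Nat.add_mod_left, Nat.mod_eq_of_lt hmlt]
  have hnd : (2 * p - 3 * k) / p = 1 := by
    rw [hn, Nat.add_div_left _ (by omega), Nat.div_eq_of_lt hmlt]
  have hkm : (p - 1 - 3 * k) % p = m - 1 := by
    rw [hr, Nat.mod_eq_of_lt (by omega)]
  have hkd : (p - 1 - 3 * k) / p = 0 := Nat.div_eq_of_lt (by omega)
  rw [hnm, hnd, hkm, hkd] at hlucas
  have hc : Nat.choose m (m - 1) = m := by
    have h1 : 1 ≤ m := by omega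
    rw [Nat.choose_symm h1, Nat.choose_one_right]
  rw [hc, Nat.choose_zero_right, mul_one] at hlucas
  have := (ZMod.natCast_eq_natCast_iff _ _ _).mpr hlucas
  rw [this, hm, Nat.cast_sub (by omega)]
  push_cast
  simp [ZMod.natCast_self]
end

section
/- Let p > 3 be a prime. Then ∑_{k=0}^{p-1} (1/k)·C(2k,k) ≡ 0 (mod p) and hence ∑_{j=1}^{(p-1)/2} (1/j)·C(2j,j) ≡ 0 (mod p), where the sums start at k=1 (resp. j=1) and 1/k denotes the inverse of k modulo p. -/
/-!
Let p = 2m + 1. Modulo p, C(2k, k) ≡ (-4)^k C(m, k) for k ≤ m (as m ≡ -1/2), and p ∣ C(2k, k)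
for m < k < p, so both sums equal ∑_{k ≤ m} C(m, k) (-4)^k / k. By the discrete integration
∑_{k ≤ n} C(n, k) x^k / k = ∑_{j ≤ n} ((1 + x)^j - 1) / j this is ∑_{j ≤ m} ((-3)^j - 1) / j.

Since C(p, 2j) / p ≡ -1 / (2j) mod p, the last sum is -2/p · ∑_j C(p, 2j) ((-3)^j - 1), and this
integer sum vanishes: both ∑_j C(p, 2j) (-3)^j and ∑_j C(p, 2j) equal 2^(p-1), the first because
1 ± √-3 are twice primitive sixth roots of unity and p ≡ ±1 mod 6.
-/

open Finset

section CommRing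

variable {R : Type*} [CommRing R]

theorem sum_Icc_choose_mul_pow (x : R) (n : ℕ) :
    ∑ k ∈ Icc 1 n, (n.choose k : R) * x ^ k = (1 + x) ^ n - 1 := by
  rw [add_comm, add_pow, sum_range_eq_add_Ico _ (by omega : 0 < n + 1), Ico_add_one_right_eq_Icc]
  simp [mul_comm]

theorem sum_range_two_mul_mul_pow_add_neg_pow (c : ℕ → R) (s : R) (N : ℕ) :
    ∑ k ∈ range (2 * N), c k * (s ^ k + (-s) ^ k) =
      2 * ∑ i ∈ range N, c (2 * i) * s ^ (2 * i) := by
  induction N with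
  | zero => simp
  | succ N ih =>
    rw [show 2 * (N + 1) = 2 * N + 1 + 1 by ring, sum_range_succ, sum_range_succ, ih,
      sum_range_succ, Even.neg_pow ⟨N, by ring⟩, Odd.neg_pow ⟨N, rfl⟩]
    ring

theorem one_add_pow_add_one_sub_pow (s : R) (m : ℕ) :
    (1 + s) ^ (2 * m + 1) + (1 - s) ^ (2 * m + 1) =
      2 * ∑ i ∈ range (m + 1), ((2 * m + 1).choose (2 * i) : R) * s ^ (2 * i) := by
  rw [← sum_range_two_mul_mul_pow_add_neg_pow (fun k => ((2 * m + 1).choose k : R)),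
    sub_eq_add_neg, add_comm 1 s, add_comm 1 (-s), add_pow, add_pow, ← sum_add_distrib,
    show 2 * (m + 1) = 2 * m + 1 + 1 by ring]
  exact sum_congr rfl fun k _ => by ring

theorem one_add_pow_add_one_sub_pow_of_sq_eq_neg_three {s : R} (hs : s ^ 2 = -3) {n : ℕ}
    (hn : n % 6 = 1 ∨ n % 6 = 5) : (1 + s) ^ n + (1 - s) ^ n = 2 ^ n := by
  have hsixth : ∀ t : R, t ^ 2 = -3 → (1 + t) ^ 6 = 64 := fun t ht => by
    rw [show 6 = 3 * 2 by rfl, pow_mul, show (1 + t) ^ 3 = -8 by linear_combination (t + 3) * ht]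
    norm_num
  have hu := hsixth s hs
  have hv := hsixth (-s) (by rw [neg_sq, hs])
  rw [← sub_eq_add_neg] at hv
  obtain ⟨q, r, hr, rfl⟩ : ∃ q r, (r = 1 ∨ r = 5) ∧ n = 6 * q + r := ⟨n / 6, n % 6, hn, by omega⟩
  have hr' : (1 + s) ^ r + (1 - s) ^ r = 2 ^ r := by
    rcases hr with rfl | rfl
    · ring
    · linear_combination (10 * s ^ 2 - 10) * hs
  rw [pow_add, pow_add, pow_add, pow_mul, pow_mul, pow_mul, hu, hv]
  linear_combination (64 : R) ^ q * hr'

end CommRing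

theorem sum_range_choose_two_mul_eq_four_pow (m : ℕ) :
    ∑ i ∈ range (m + 1), ((2 * m + 1).choose (2 * i) : ℤ) = 4 ^ m := by
  have h := one_add_pow_add_one_sub_pow (1 : ℤ) m
  norm_num [pow_succ, pow_mul] at h
  linarith

theorem sum_range_choose_two_mul_mul_neg_three_pow {m : ℕ} (hm : ¬ 3 ∣ 2 * m + 1) :
    ∑ i ∈ range (m + 1), ((2 * m + 1).choose (2 * i) : ℤ) * (-3) ^ i = 4 ^ m := by
  have hs : (Zsqrtd.sqrtd : ℤ√(-3)) ^ 2 = -3 := by rw [sq, Zsqrtd.dmuld]; simp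
  have h := one_add_pow_add_one_sub_pow (Zsqrtd.sqrtd : ℤ√(-3)) m
  rw [one_add_pow_add_one_sub_pow_of_sq_eq_neg_three hs (by omega)] at h
  simp only [pow_mul, hs] at h
  have h' : (2 ^ (2 * m + 1) : ℤ) =
      2 * ∑ i ∈ range (m + 1), ((2 * m + 1).choose (2 * i) : ℤ) * (-3) ^ i :=
    Int.cast_injective (α := ℤ√(-3)) (by push_cast; exact h)
  norm_num [pow_succ, pow_mul] at h'
  linarith

theorem sum_Icc_choose_div_self_mul_neg_three_pow_sub_one {p m : ℕ} (hp : p.Prime)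
    (hpm : p = 2 * m + 1) (h3 : ¬ 3 ∣ p) :
    ∑ j ∈ Icc 1 m, ((p.choose (2 * j) / p : ℕ) : ℤ) * ((-3) ^ j - 1) = 0 := by
  have hpq : ∀ j ∈ Icc 1 m, (p : ℤ) * (p.choose (2 * j) / p : ℕ) = p.choose (2 * j) := by
    intro j hj
    simp only [mem_Icc] at hj
    exact_mod_cast Nat.mul_div_cancel' (hp.dvd_choose_self (by omega) (by omega))
  suffices (p : ℤ) * ∑ j ∈ Icc 1 m, ((p.choose (2 * j) / p : ℕ) : ℤ) * ((-3) ^ j - 1) = 0 by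
    simpa [hp.ne_zero] using this
  calc (p : ℤ) * ∑ j ∈ Icc 1 m, ((p.choose (2 * j) / p : ℕ) : ℤ) * ((-3) ^ j - 1)
      = ∑ j ∈ range (m + 1), ((2 * m + 1).choose (2 * j) : ℤ) * ((-3) ^ j - 1) := by
        rw [mul_sum, sum_range_eq_add_Ico _ (by omega), Ico_add_one_right_eq_Icc, ← hpm]
        simp only [pow_zero, sub_self, mul_zero, zero_add, ← mul_assoc]
        exact sum_congr rfl fun j hj => by rw [hpq j hj]
    _ = 0 := by
      simp only [mul_sub, mul_one, sum_sub_distrib,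
        sum_range_choose_two_mul_mul_neg_three_pow (hpm ▸ h3), sum_range_choose_two_mul_eq_four_pow,
        sub_self]

section Field

variable {K : Type*} [Field K]

theorem sum_Icc_inv_mul_choose_mul_pow (x : K) {n : ℕ} (hn : ∀ k ∈ Icc 1 n, (k : K) ≠ 0) :
    ∑ k ∈ Icc 1 n, (k : K)⁻¹ * (n.choose k * x ^ k) =
      ∑ j ∈ Icc 1 n, (j : K)⁻¹ * ((1 + x) ^ j - 1) := by
  induction n with
  | zero => simp
  | succ n ih =>
    have hn1 : ((n + 1 : ℕ) : K) ≠ 0 := hn _ (by simp)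
    have hterm : ∀ k ∈ Icc 1 (n + 1), (k : K)⁻¹ * ((n + 1).choose k * x ^ k) =
        (k : K)⁻¹ * (n.choose k * x ^ k) + ((n + 1 : ℕ) : K)⁻¹ * ((n + 1).choose k * x ^ k) := by
      intro k hk
      obtain ⟨j, rfl⟩ : ∃ j, k = j + 1 := ⟨k - 1, by simp at hk; omega⟩
      have hj1 : ((j + 1 : ℕ) : K) ≠ 0 := hn _ hk
      have hmul : ((n + 1 : ℕ) : K) * n.choose j = (n + 1).choose (j + 1) * (j + 1 : ℕ) := by
        exact_mod_cast congrArg (Nat.cast : ℕ → K) (Nat.add_one_mul_choose_eq n j)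
      have hpascal : ((n + 1).choose (j + 1) : K) = n.choose j + n.choose (j + 1) := by
        exact_mod_cast congrArg (Nat.cast : ℕ → K) (Nat.choose_succ_succ n j)
      field_simp
      linear_combination x ^ (j + 1) * (((n + 1 : ℕ) : K) * hpascal + hmul)
    rw [sum_congr rfl hterm, sum_add_distrib, ← mul_sum, sum_Icc_choose_mul_pow,
      sum_Icc_succ_top (by omega), Nat.choose_succ_self,
      ih fun k hk => hn k (by simp at hk ⊢; omega),
      sum_Icc_succ_top (by omega)]
    simp

theorem cast_choose_two_mul_eq_choose_mul_neg_four_pow {m k : ℕ} (hm : (2 * m + 1 : K) = 0)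
    (hk : k ≤ m) (hk' : ∀ j ∈ Icc 1 k, (j : K) ≠ 0) :
    ((2 * k).choose k : K) = m.choose k * (-4) ^ k := by
  induction k with
  | zero => simp
  | succ k ih =>
    have hk1 : ((k + 1 : ℕ) : K) ≠ 0 := hk' _ (by simp)
    have hcentral : ((k + 1 : ℕ) : K) * (2 * (k + 1)).choose (k + 1) =
        2 * (2 * k + 1) * (2 * k).choose k := by
      simp_rw [← Nat.centralBinom_eq_two_mul_choose]
      exact_mod_cast congrArg (Nat.cast : ℕ → K) (Nat.succ_mul_centralBinom_succ k)
    have hchoose : (m.choose (k + 1) : K) * (k + 1 : ℕ) = m.choose k * (m - k : ℕ) := by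
      exact_mod_cast congrArg (Nat.cast : ℕ → K) (Nat.choose_succ_right_eq m k)
    rw [Nat.cast_sub (by omega)] at hchoose
    apply mul_left_cancel₀ hk1
    rw [hcentral, ih (by omega) fun j hj => hk' j (by simp at hj ⊢; omega)]
    linear_combination (-4 : K) ^ k * (4 * hchoose + 2 * (m.choose k : K) * hm)

end Field

namespace ZMod

variable {p : ℕ} [Fact p.Prime]

theorem natCast_choose_sub_one {k : ℕ} (hk : k < p) : ((p - 1).choose k : ZMod p) = (-1) ^ k := by
  induction k with
  | zero => simp
  | succ k ih =>
    have hpascal : (p - 1).choose k + (p - 1).choose (k + 1) = p.choose (k + 1) := by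
      rw [← Nat.choose_succ_succ', Nat.sub_add_cancel (by omega)]
    have hdvd : ((p.choose (k + 1) : ℕ) : ZMod p) = 0 :=
      (natCast_eq_zero_iff _ _).2 ((Fact.out : p.Prime).dvd_choose_self (by omega) hk)
    rw [← hpascal, Nat.cast_add, ih (by omega)] at hdvd
    linear_combination hdvd

theorem natCast_choose_div_self_mul {k : ℕ} (hk : 0 < k) (hkp : k < p) :
    ((p.choose k / p : ℕ) : ZMod p) * k = (-1) ^ (k - 1) := by
  obtain ⟨q, hq⟩ := (Fact.out : p.Prime).dvd_choose_self hk.ne' hkp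
  have hqk : q * k = (p - 1).choose (k - 1) := by
    have h := Nat.add_one_mul_choose_eq (p - 1) (k - 1)
    rw [Nat.sub_add_cancel (by omega), Nat.sub_add_cancel hk, hq, mul_assoc] at h
    exact (Nat.eq_of_mul_eq_mul_left (by omega) h).symm
  rw [hq, Nat.mul_div_cancel_left _ (by omega), ← natCast_choose_sub_one (by omega), ← hqk]
  push_cast
  ring

theorem sum_Icc_inv_mul_neg_three_pow_sub_one {m : ℕ} (hpm : p = 2 * m + 1) (hp3 : p ≠ 3) :
    ∑ j ∈ Icc 1 m, (j : ZMod p)⁻¹ * ((-3) ^ j - 1) = 0 := by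
  have hinv : ∀ j ∈ Icc 1 m, (j : ZMod p)⁻¹ = -2 * (p.choose (2 * j) / p : ℕ) := by
    intro j hj
    simp only [mem_Icc] at hj
    have h := natCast_choose_div_self_mul (p := p) (k := 2 * j) (by omega) (by omega)
    rw [Odd.neg_one_pow ⟨j - 1, by omega⟩] at h
    refine inv_eq_of_mul_eq_one_left ?_
    push_cast at h
    linear_combination -h
  have h3 : ¬ 3 ∣ p := fun h => hp3 ((Nat.prime_dvd_prime_iff_eq Nat.prime_three Fact.out).1 h).symm
  calc ∑ j ∈ Icc 1 m, (j : ZMod p)⁻¹ * ((-3) ^ j - 1)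
      = -2 * ((∑ j ∈ Icc 1 m, ((p.choose (2 * j) / p : ℕ) : ℤ) * ((-3) ^ j - 1) : ℤ) : ZMod p) := by
        simp only [Int.cast_sum, Int.cast_mul, Int.cast_natCast, Int.cast_sub, Int.cast_pow,
          Int.cast_neg, Int.cast_ofNat, Int.cast_one, mul_sum]
        exact sum_congr rfl fun j hj => by rw [hinv j hj]; ring
    _ = 0 := by rw [sum_Icc_choose_div_self_mul_neg_three_pow_sub_one Fact.out hpm h3]; simp

end ZMod

theorem stmt18 (p : ℕ) (hp : p.Prime) (hp3 : 3 < p) :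
    (∑ k ∈ Finset.Icc 1 (p - 1), (k : ZMod p)⁻¹ * Nat.choose (2 * k) k = 0) ∧
      (∑ j ∈ Finset.Icc 1 ((p - 1) / 2), (j : ZMod p)⁻¹ * Nat.choose (2 * j) j = 0) := by
  have := Fact.mk hp
  obtain ⟨m, hpm⟩ := hp.odd_of_ne_two (by omega)
  have hm : (p - 1) / 2 = m := by omega
  have hunit : ∀ k ∈ Icc 1 m, (k : ZMod p) ≠ 0 := fun k hk => by
    simp only [mem_Icc] at hk
    rw [Ne, ZMod.natCast_eq_zero_iff]
    exact Nat.not_dvd_of_pos_of_lt (by omega) (by omega)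
  have h2m : (2 * m + 1 : ZMod p) = 0 := by
    simpa using congrArg (Nat.cast : ℕ → ZMod p) hpm.symm
  have half : ∑ j ∈ Icc 1 m, (j : ZMod p)⁻¹ * Nat.choose (2 * j) j = 0 := by
    calc ∑ j ∈ Icc 1 m, (j : ZMod p)⁻¹ * Nat.choose (2 * j) j
        = ∑ j ∈ Icc 1 m, (j : ZMod p)⁻¹ * (m.choose j * (-4) ^ j) :=
          sum_congr rfl fun j hj => by
            rw [cast_choose_two_mul_eq_choose_mul_neg_four_pow h2m (mem_Icc.1 hj).2
              fun i hi => hunit i (Icc_subset_Icc_right (mem_Icc.1 hj).2 hi)]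
      _ = ∑ j ∈ Icc 1 m, (j : ZMod p)⁻¹ * ((-3) ^ j - 1) := by
          rw [sum_Icc_inv_mul_choose_mul_pow _ hunit]; norm_num
      _ = 0 := ZMod.sum_Icc_inv_mul_neg_three_pow_sub_one hpm (by omega)
  refine ⟨?_, hm ▸ half⟩
  rw [← half]
  refine (sum_subset (Icc_subset_Icc_right (by omega)) fun k hk hkm => ?_).symm
  simp only [mem_Icc, not_and, not_le] at hk hkm
  have hdvd : p ∣ (2 * k).choose k := two_mul k ▸ hp.dvd_choose_add (by omega) (by omega) (by omega)
  rw [(ZMod.natCast_eq_zero_iff _ _).2 hdvd, mul_zero]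
end
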